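/- There exists a class X of metric spaces such that P_X equals the set SI of all amenable, increasing, subadditive functions [0,∞) → [0,∞). -/

import Mathlib

open scoped NNReal

/-- `ρ` is a metric on `Y` (valued in `ℝ≥0 = [0,∞)`). -/
def IsMetric {Y : Type} (ρ : Y → Y → ℝ≥0) : Prop :=
  (∀ x y, ρ x y = 0 ↔ x = y) ∧ (∀ x y, ρ x y = ρ y x) ∧
    (∀ x y z, ρ x y ≤ ρ x z + ρ z y)

/-- `ρ` is an ultrametric on `Y`. -/
def IsUltrametric {Y : Type} (ρ : Y → Y → ℝ≥0) : Prop :=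
  (∀ x y, ρ x y = 0 ↔ x = y) ∧ (∀ x y, ρ x y = ρ y x) ∧
    (∀ x y z, ρ x y ≤ max (ρ x z) (ρ z y))

/-- `ρ` is a discrete metric: some `k > 0` with `ρ x y = k` for all distinct `x, y`. -/
def IsDiscreteMetric {Y : Type} (ρ : Y → Y → ℝ≥0) : Prop :=
  ∃ k : ℝ≥0, 0 < k ∧ ∀ x y, x ≠ y → ρ x y = k

/-- `f` is metric preserving. -/
def MetricPreserving (f : ℝ≥0 → ℝ≥0) : Prop :=
  ∀ (Y : Type) (ρ : Y → Y → ℝ≥0), IsMetric ρ → IsMetric fun a b => f (ρ a b)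

/-- `f` is ultrametric preserving. -/
def UltrametricPreserving (f : ℝ≥0 → ℝ≥0) : Prop :=
  ∀ (Y : Type) (ρ : Y → Y → ℝ≥0), IsUltrametric ρ → IsUltrametric fun a b => f (ρ a b)

/-- A class of (distance-)spaces: a predicate on pairs `(Y, ρ)`. -/
def MClass : Type 1 := ∀ Y : Type, (Y → Y → ℝ≥0) → Prop

/-- `f ∈ P_X`: `f` preserves the class `X`. -/
def Preserves (X : MClass) (f : ℝ≥0 → ℝ≥0) : Prop :=
  ∀ (Y : Type) (ρ : Y → Y → ℝ≥0), X Y ρ → X Y fun a b => f (ρ a b)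

/-! Take for `X` the metric spaces whose three-point members are ultrametric.
Testing `f` on `(ℝ≥0, nndist)` forces amenability and subadditivity, since `nndist 0 t = t` and
`nndist x (x + y) = y`; testing it on the isosceles triangle with base `a` and legs `b ≥ a`, which
is ultrametric, forces `f a ≤ max (f b) (f b)`. Conversely an amenable increasing subadditive `f`
preserves metrics and, commuting with `max`, preserves ultrametrics. -/

def metricUltrametricOnTriples : MClass :=
  fun Y ρ => IsMetric ρ ∧ (Nonempty (Y ≃ Fin 3) → IsUltrametric ρ)

lemma IsUltrametric.isMetric {Y : Type} {ρ : Y → Y → ℝ≥0} (h : IsUltrametric ρ) : IsMetric ρ :=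
  ⟨h.1, h.2.1, fun x y z => (h.2.2 x y z).trans (max_le le_self_add le_add_self)⟩

lemma isMetric_nndist {Y : Type} [MetricSpace Y] : IsMetric (nndist : Y → Y → ℝ≥0) :=
  ⟨fun _ _ => nndist_eq_zero, nndist_comm, fun _ _ _ => nndist_triangle _ _ _⟩

section Composition

variable {Y : Type} {ρ : Y → Y → ℝ≥0} {f : ℝ≥0 → ℝ≥0}

lemma IsMetric.comp (hρ : IsMetric ρ) (hf₀ : ∀ t, f t = 0 ↔ t = 0) (hf : Monotone f)
    (hsub : ∀ x y, f (x + y) ≤ f x + f y) : IsMetric fun a b => f (ρ a b) :=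
  ⟨fun a b => (hf₀ _).trans (hρ.1 a b), fun a b => congrArg f (hρ.2.1 a b),
    fun a b c => (hf (hρ.2.2 a b c)).trans (hsub _ _)⟩

lemma IsUltrametric.comp (hρ : IsUltrametric ρ) (hf₀ : ∀ t, f t = 0 ↔ t = 0) (hf : Monotone f) :
    IsUltrametric fun a b => f (ρ a b) :=
  ⟨fun a b => (hf₀ _).trans (hρ.1 a b), fun a b => congrArg f (hρ.2.1 a b),
    fun a b c => (hf (hρ.2.2 a b c)).trans_eq hf.map_max⟩

end Composition

section Necessity

variable {f : ℝ≥0 → ℝ≥0}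

lemma amenable_of_isMetric_comp_nndist (hf : IsMetric fun a b : ℝ≥0 => f (nndist a b)) (t : ℝ≥0) :
    f t = 0 ↔ t = 0 := by
  simpa only [NNReal.nndist_zero_eq_val, eq_comm (b := t)] using hf.1 0 t

lemma subadditive_of_isMetric_comp_nndist (hf : IsMetric fun a b : ℝ≥0 => f (nndist a b))
    (x y : ℝ≥0) : f (x + y) ≤ f x + f y := by
  have hy : nndist x (x + y) = y := by
    rw [NNReal.nndist_eq, add_tsub_cancel_left, tsub_eq_zero_of_le le_self_add,
      max_eq_right zero_le]
  simpa only [NNReal.nndist_zero_eq_val, hy] using hf.2.2 0 (x + y) x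

def isoscelesTriangle (a b : ℝ≥0) (i j : Fin 3) : ℝ≥0 :=
  if i = j then 0 else if i = 2 ∨ j = 2 then b else a

lemma isUltrametric_isoscelesTriangle {a b : ℝ≥0} (ha : a ≠ 0) (hab : a ≤ b) :
    IsUltrametric (isoscelesTriangle a b) := by
  have hb : b ≠ 0 := ne_bot_of_le_ne_bot ha hab
  refine ⟨fun x y => ?_, fun x y => ?_, fun x y z => ?_⟩ <;>
    fin_cases x <;> fin_cases y <;> try fin_cases z
  all_goals simp [isoscelesTriangle, ha, hb, hab]

lemma monotone_of_ultrametric_comp_fin3 (hf₀ : f 0 = 0)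
    (hf : ∀ ρ : Fin 3 → Fin 3 → ℝ≥0, IsUltrametric ρ → IsUltrametric fun i j => f (ρ i j)) :
    Monotone f := by
  intro a b hab
  rcases eq_or_ne a 0 with rfl | ha
  · rw [hf₀]; exact zero_le
  simpa [isoscelesTriangle] using (hf _ (isUltrametric_isoscelesTriangle ha hab)).2.2 0 1 2

end Necessity

/-- There is a class X of metric spaces with P_X = SI. -/
theorem stmt_14 :
    ∃ X : MClass, (∀ (Y : Type) (ρ : Y → Y → ℝ≥0), X Y ρ → IsMetric ρ) ∧
      {f : ℝ≥0 → ℝ≥0 | Preserves X f} =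
        {f : ℝ≥0 → ℝ≥0 |
          (∀ t, f t = 0 ↔ t = 0) ∧ Monotone f ∧ ∀ x y, f (x + y) ≤ f x + f y} := by
  refine ⟨metricUltrametricOnTriples, fun _ _ h => h.1, ?_⟩
  ext f
  constructor
  · intro hf
    have hnot_triple : ¬ Nonempty (ℝ≥0 ≃ Fin 3) := fun ⟨e⟩ =>
      Infinite.not_finite (Finite.of_equiv _ e.symm)
    have hline : IsMetric fun a b : ℝ≥0 => f (nndist a b) :=
      (hf ℝ≥0 nndist ⟨isMetric_nndist, hnot_triple.elim⟩).1
    have hf₀ := amenable_of_isMetric_comp_nndist hline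
    refine ⟨hf₀, monotone_of_ultrametric_comp_fin3 ((hf₀ 0).2 rfl) fun ρ hρ => ?_,
      subadditive_of_isMetric_comp_nndist hline⟩
    exact (hf (Fin 3) ρ ⟨hρ.isMetric, fun _ => hρ⟩).2 ⟨.refl _⟩
  · rintro ⟨hf₀, hf, hsub⟩ Y ρ ⟨hρ, hρ₃⟩
    exact ⟨hρ.comp hf₀ hf hsub, fun h => (hρ₃ h).comp hf₀ hf⟩
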